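/- For every nonnegative integers a ≤ b with b - a even, the binary word 1 0^a 1 0^b (a 1, then a zeros, then a 1, then b zeros) is a shuffle square. -/
import Mathlib


inductive Interleave {α : Type*} : List α → List α → List α → Prop
  | nil : Interleave [] [] []
  | left {a : α} {l₁ l₂ l : List α} : Interleave l₁ l₂ l → Interleave (a :: l₁) l₂ (a :: l)
  | right {a : α} {l₁ l₂ l : List α} : Interleave l₁ l₂ l → Interleave l₁ (a :: l₂) (a :: l)

def IsShuffleSquare {α : Type*} (W : List α) : Prop := ∃ U, Interleave U U W

lemma interleave_nil_right {α : Type*} (l : List α) : Interleave [] l l := by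
  induction l with
  | nil => exact Interleave.nil
  | cons x t ih => exact Interleave.right ih

lemma interleave_prepend_left {α : Type*} {l₁ l₂ l : List α} (t : List α)
    (h : Interleave l₁ l₂ l) : Interleave (t ++ l₁) l₂ (t ++ l) := by
  induction t with
  | nil => exact h
  | cons x s ih => exact Interleave.left ih

theorem one_zeros_one_zeros_shuffle_square (a b : ℕ) (hab : a ≤ b) (h : Even (b - a)) :
    IsShuffleSquare (true :: (List.replicate a false ++ true :: List.replicate b false)) := by
  obtain ⟨k, hk⟩ := h
  have hb : b = a + (k + k) := by omega
  subst hb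
  refine ⟨true :: List.replicate (a + k) false, Interleave.left ?_⟩
  have h1 : Interleave (List.replicate k false) (List.replicate (a + k) false)
      (List.replicate (a + (k + k)) false) := by
    have := interleave_prepend_left (List.replicate k false)
      (interleave_nil_right (List.replicate (a + k) false)) (l₁ := [])
    simpa [← List.replicate_add, Nat.add_comm, Nat.add_assoc, Nat.add_left_comm] using this
  have h2 : Interleave (List.replicate k false)
      (true :: List.replicate (a + k) false)
      (true :: List.replicate (a + (k + k)) false) := Interleave.right h1
  have h3 := interleave_prepend_left (List.replicate a false) h2
  simpa [← List.replicate_add] using h3
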